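/- Let (C, d) be a chain complex with a retraction (Π, I, h) to H = H(C,d) satisfying the side conditions, and let ∂' be a perturbation (a sum of operators strictly decreasing the filtration or of arity ≥ 2 on the bar coalgebra) such that all infinite sums below converge. Then the perturbed maps m^{can} = Σ_{a≥0} Π̂ ∂' (ĥ∂')^a Î, Π' = Σ_{a≥0} Π̂(∂'ĥ)^a, I' = Σ_{a≥0} (ĥ∂')^a Î, h' = Σ_{a≥0} ĥ(∂'ĥ)^a satisfy: (m + original differential) I' = I' m^{can}, Π'(m) = m^{can} Π', Π' ∘ I' = id, and (total differential)h' + h'(total differential) = I'Π' − id; moreover (m^{can})² = 0. -/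
import Mathlib



theorem limOp_fin {R B : Type*} [CommRing R] [AddCommGroup B] [Module R B]
    (T : Module.End R B) (hT : ∀ x : B, ∃ N : ℕ, ∀ a, N ≤ a → (T ^ a) x = 0) (z : B) :
    (Function.support fun a : ℕ => (T ^ a) z).Finite := by
  obtain ⟨N, hN⟩ := hT z
  apply Set.Finite.subset (Set.finite_Iio N)
  intro a ha
  simp only [Function.mem_support] at ha
  simp only [Set.mem_Iio]
  by_contra hc
  push_neg at hc
  exact ha (hN a hc)

noncomputable def limOp {R B : Type*} [CommRing R] [AddCommGroup B] [Module R B]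
    (T : Module.End R B) (hT : ∀ x : B, ∃ N : ℕ, ∀ a, N ≤ a → (T ^ a) x = 0) :
    Module.End R B where
  toFun x := ∑ᶠ a : ℕ, (T ^ a) x
  map_add' x y := by
    simp only [map_add]
    exact finsum_add_distrib (limOp_fin T hT x) (limOp_fin T hT y)
  map_smul' c x := by
    simp only [map_smul, RingHom.id_apply]
    exact (smul_finsum' c (limOp_fin T hT x)).symm

theorem limOp_apply {R B : Type*} [CommRing R] [AddCommGroup B] [Module R B]
    (T : Module.End R B) (hT : ∀ x : B, ∃ N : ℕ, ∀ a, N ≤ a → (T ^ a) x = 0)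
    (x : B) (N : ℕ) (hN : ∀ a, N ≤ a → (T ^ a) x = 0) :
    limOp T hT x = ∑ a ∈ Finset.range N, (T ^ a) x := by
  have h0 : limOp T hT x = ∑ᶠ a : ℕ, (T ^ a) x := rfl
  rw [h0]
  apply finsum_eq_finset_sum_of_support_subset
  intro a ha
  simp only [Function.mem_support] at ha
  simp only [Finset.coe_range, Set.mem_Iio]
  by_contra hc
  push_neg at hc
  exact ha (hN a hc)
/-- homological perturbation lemma, coalgebra version: Let `(B, d)` be a chain
complex with a retraction `(p, i, h)` to `H = H(B,d)` (zero differential on `H`) satisfying the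
side conditions, and let `δ` be a perturbation such that all the infinite sums below converge
(here: `(hδ)^a` and `(δh)^a` vanish pointwise for large `a`, as guaranteed by the gapping
condition of the discrete submonoid `G`).  Then the perturbed maps
`m^can = Σ p δ (hδ)^a i`, `P = Σ p (δh)^a`, `I = Σ (hδ)^a i`, `hh = Σ h (δh)^a`
satisfy: `(d+δ) ∘ I = I ∘ m^can`, `P ∘ (d+δ) = m^can ∘ P`, `P ∘ I = id`,
`(d+δ) hh + hh (d+δ) = I P − id`, and `(m^can)² = 0`. -/
theorem stmt19 (R : Type*) [CommRing R]
    (B H : Type*) [AddCommGroup B] [Module R B] [AddCommGroup H] [Module R H]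
    (d δ h : Module.End R B) (p : B →ₗ[R] H) (i : H →ₗ[R] B)
    (hd : d * d = 0)
    (hpd : p.comp d = 0) (hdi : d.comp i = 0) (hpi : p.comp i = LinearMap.id)
    (hhom : d * h + h * d = i.comp p - 1)
    (hs1 : h * h = 0) (hs2 : p.comp h = 0) (hs3 : h.comp i = 0)
    -- (d + δ)² = 0: δ is a perturbation of the differential
    (hm : (d + δ) * (d + δ) = 0)
    -- convergence (pointwise nilpotence)
    (hnilI : ∀ x : B, ∃ N : ℕ, ∀ a, N ≤ a → ((h * δ) ^ a) x = 0)
    (hnilP : ∀ x : B, ∃ N : ℕ, ∀ a, N ≤ a → ((δ * h) ^ a) x = 0) :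
    ∃ (mcan : Module.End R H) (P : B →ₗ[R] H) (I : H →ₗ[R] B) (hh : Module.End R B),
      -- the defining formulas (as stabilized partial sums)
      (∀ (x : H) (N : ℕ), (∀ a, N ≤ a → ((h * δ) ^ a) (i x) = 0) →
        I x = ∑ a ∈ Finset.range N, ((h * δ) ^ a) (i x)) ∧
      (∀ (x : H) (N : ℕ), (∀ a, N ≤ a → ((h * δ) ^ a) (i x) = 0) →
        mcan x = ∑ a ∈ Finset.range N, p (δ (((h * δ) ^ a) (i x)))) ∧
      (∀ (x : B) (N : ℕ), (∀ a, N ≤ a → ((δ * h) ^ a) x = 0) →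
        P x = ∑ a ∈ Finset.range N, p (((δ * h) ^ a) x)) ∧
      (∀ (x : B) (N : ℕ), (∀ a, N ≤ a → ((δ * h) ^ a) x = 0) →
        hh x = ∑ a ∈ Finset.range N, h (((δ * h) ^ a) x)) ∧
      -- the perturbed retraction identities
      ((d + δ).comp I = I.comp mcan) ∧
      (P.comp (d + δ) = mcan.comp P) ∧
      (P.comp I = LinearMap.id) ∧
      ((d + δ) * hh + hh * (d + δ) = I.comp P - 1) ∧
      (mcan * mcan = 0) := by
  classical
  set A : Module.End R B := limOp (h * δ) hnilI with hAdef
  set C : Module.End R B := limOp (δ * h) hnilP with hCdef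
  have Aap : ∀ (x : B) (N : ℕ), (∀ a, N ≤ a → ((h * δ) ^ a) x = 0) →
      A x = ∑ a ∈ Finset.range N, ((h * δ) ^ a) x :=
    fun x N hN => limOp_apply _ _ x N hN
  have Cap : ∀ (x : B) (N : ℕ), (∀ a, N ≤ a → ((δ * h) ^ a) x = 0) →
      C x = ∑ a ∈ Finset.range N, ((δ * h) ^ a) x :=
    fun x N hN => limOp_apply _ _ x N hN
  -- a finite-sum shifting lemma
  have sumshift : ∀ (E : Module.End R B) (x : B) (N : ℕ), (E ^ N) x = 0 →
      ∑ a ∈ Finset.range N, (E ^ (a + 1)) x = ∑ a ∈ Finset.range N, (E ^ a) x - x := by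
    intro E x N h0
    have h1 := Finset.sum_range_succ' (fun a => (E ^ a) x) N
    have h2 := Finset.sum_range_succ (fun a => (E ^ a) x) N
    simp only [pow_zero, Module.End.one_apply] at h1
    rw [h0, add_zero] at h2
    have h3 := h1.symm.trans h2
    rw [← h3]
    abel
  -- semiconjugation
  have swδ : ∀ n : ℕ, δ * (h * δ) ^ n = (δ * h) ^ n * δ := by
    have s : SemiconjBy δ (h * δ) (δ * h) := (mul_assoc δ h δ).symm
    exact fun n => s.pow_right n
  have swh : ∀ n : ℕ, h * (δ * h) ^ n = (h * δ) ^ n * h := by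
    have s : SemiconjBy h (δ * h) (h * δ) := (mul_assoc h δ h).symm
    exact fun n => s.pow_right n
  -- the six analytic relations
  have rA1 : A * (h * δ) = A - 1 := by
    ext x
    obtain ⟨N, hN⟩ := hnilI x
    have step : ∀ a : ℕ, ((h * δ) ^ a) (h (δ x)) = ((h * δ) ^ (a + 1)) x := by
      intro a; rw [pow_succ]; rfl
    simp only [Module.End.mul_apply, LinearMap.sub_apply, Module.End.one_apply]
    rw [Aap (h (δ x)) N (fun a ha => by rw [step a]; exact hN _ (Nat.le_succ_of_le ha)),
        Aap x N hN]
    simp only [step]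
    exact sumshift (h * δ) x N (hN N le_rfl)
  have rA2 : (h * δ) * A = A - 1 := by
    ext x
    obtain ⟨N, hN⟩ := hnilI x
    have step : ∀ a : ℕ, h (δ (((h * δ) ^ a) x)) = ((h * δ) ^ (a + 1)) x := by
      intro a; rw [pow_succ']; rfl
    simp only [Module.End.mul_apply, LinearMap.sub_apply, Module.End.one_apply]
    rw [Aap x N hN, map_sum, map_sum]
    simp only [step]
    exact sumshift (h * δ) x N (hN N le_rfl)
  have rC1 : C * (δ * h) = C - 1 := by
    ext x
    obtain ⟨N, hN⟩ := hnilP x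
    have step : ∀ a : ℕ, ((δ * h) ^ a) (δ (h x)) = ((δ * h) ^ (a + 1)) x := by
      intro a; rw [pow_succ]; rfl
    simp only [Module.End.mul_apply, LinearMap.sub_apply, Module.End.one_apply]
    rw [Cap (δ (h x)) N (fun a ha => by rw [step a]; exact hN _ (Nat.le_succ_of_le ha)),
        Cap x N hN]
    simp only [step]
    exact sumshift (δ * h) x N (hN N le_rfl)
  have rC2 : (δ * h) * C = C - 1 := by
    ext x
    obtain ⟨N, hN⟩ := hnilP x
    have step : ∀ a : ℕ, δ (h (((δ * h) ^ a) x)) = ((δ * h) ^ (a + 1)) x := by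
      intro a; rw [pow_succ']; rfl
    simp only [Module.End.mul_apply, LinearMap.sub_apply, Module.End.one_apply]
    rw [Cap x N hN, map_sum, map_sum]
    simp only [step]
    exact sumshift (δ * h) x N (hN N le_rfl)
  have rδA : δ * A = C * δ := by
    ext x
    obtain ⟨N, hN⟩ := hnilI x
    have step : ∀ a : ℕ, δ (((h * δ) ^ a) x) = ((δ * h) ^ a) (δ x) := by
      intro a
      have := DFunLike.congr_fun (swδ a) x
      simpa only [Module.End.mul_apply] using this
    simp only [Module.End.mul_apply]
    rw [Aap x N hN, map_sum,
        Cap (δ x) N (fun a ha => by rw [← step a, hN a ha, map_zero])]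
    exact Finset.sum_congr rfl fun a _ => step a
  have rhC : h * C = A * h := by
    ext x
    obtain ⟨N, hN⟩ := hnilP x
    have step : ∀ a : ℕ, h (((δ * h) ^ a) x) = ((h * δ) ^ a) (h x) := by
      intro a
      have := DFunLike.congr_fun (swh a) x
      simpa only [Module.End.mul_apply] using this
    simp only [Module.End.mul_apply]
    rw [Cap x N hN, map_sum,
        Aap (h x) N (fun a ha => by rw [← step a, hN a ha, map_zero])]
    exact Finset.sum_congr rfl fun a _ => step a
  -- algebraic consequences
  have e2 : d * δ + δ * d + δ * δ = 0 := by
    have hx : (d + δ) * (d + δ) - d * d = d * δ + δ * d + δ * δ := by noncomm_ring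
    rw [← hx, hm, hd, sub_zero]
  have hip : i.comp p = d * h + h * d + 1 := by
    rw [hhom]; noncomm_ring
  have eCh : C * h = h := by
    linear_combination (norm := noncomm_ring) (-rC1) * h + (C * δ) * hs1
  have eCA : C * A = C + A - 1 := by
    linear_combination (norm := noncomm_ring) (-C) * rA2 + eCh * (δ * A) + rA2
  have keyK : A * (i.comp p) * C = d * h * C + A * (h * d) + A + (C - 1) := by
    linear_combination (norm := noncomm_ring) A * hip * C - rA1 * (d * h * C)
      - (A * h * d) * rC2 - rA1 * (δ * h * C) - (A - 1) * rC2 + (A * h) * e2 * (h * C)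
  -- pointwise versions
  have pA1 : ∀ y : B, A (h (δ y)) = A y - y := fun y => by
    have := DFunLike.congr_fun rA1 y
    simpa only [Module.End.mul_apply, LinearMap.sub_apply, Module.End.one_apply] using this
  have pA2 : ∀ y : B, h (δ (A y)) = A y - y := fun y => by
    have := DFunLike.congr_fun rA2 y
    simpa only [Module.End.mul_apply, LinearMap.sub_apply, Module.End.one_apply] using this
  have pC1 : ∀ y : B, C (δ (h y)) = C y - y := fun y => by
    have := DFunLike.congr_fun rC1 y
    simpa only [Module.End.mul_apply, LinearMap.sub_apply, Module.End.one_apply] using this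
  have pC2 : ∀ y : B, δ (h (C y)) = C y - y := fun y => by
    have := DFunLike.congr_fun rC2 y
    simpa only [Module.End.mul_apply, LinearMap.sub_apply, Module.End.one_apply] using this
  have pδA : ∀ y : B, δ (A y) = C (δ y) := fun y => by
    have := DFunLike.congr_fun rδA y
    simpa only [Module.End.mul_apply] using this
  have phC : ∀ y : B, h (C y) = A (h y) := fun y => by
    have := DFunLike.congr_fun rhC y
    simpa only [Module.End.mul_apply] using this
  have pK : ∀ y : B, A (i (p (C y))) = d (h (C y)) + A (h (d y)) + A y + (C y - y) :=
    fun y => by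
    have := DFunLike.congr_fun keyK y
    simpa only [Module.End.mul_apply, LinearMap.add_apply, LinearMap.sub_apply,
      Module.End.one_apply, LinearMap.comp_apply] using this
  have phi : ∀ x : H, h (i x) = 0 := fun x => by
    have := DFunLike.congr_fun hs3 x
    simpa only [LinearMap.comp_apply, LinearMap.zero_apply] using this
  have pph : ∀ y : B, p (h y) = 0 := fun y => by
    have := DFunLike.congr_fun hs2 y
    simpa only [LinearMap.comp_apply, LinearMap.zero_apply] using this
  have ppd : ∀ y : B, p (d y) = 0 := fun y => by
    have := DFunLike.congr_fun hpd y
    simpa only [LinearMap.comp_apply, LinearMap.zero_apply] using this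
  have pdi : ∀ x : H, d (i x) = 0 := fun x => by
    have := DFunLike.congr_fun hdi x
    simpa only [LinearMap.comp_apply, LinearMap.zero_apply] using this
  have pip : ∀ x : H, p (i x) = x := fun x => by
    have := DFunLike.congr_fun hpi x
    simpa only [LinearMap.comp_apply, LinearMap.id_apply] using this
  have pe2 : ∀ y : B, d (δ y) + δ (d y) + δ (δ y) = 0 := fun y => by
    have := DFunLike.congr_fun e2 y
    simpa only [Module.End.mul_apply, LinearMap.add_apply, LinearMap.zero_apply] using this
  have pm : ∀ y : B, d (d y + δ y) + δ (d y + δ y) = 0 := fun y => by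
    have := DFunLike.congr_fun hm y
    simpa only [Module.End.mul_apply, LinearMap.add_apply, LinearMap.zero_apply] using this
  -- the key `p ∘ δ ∘ (d+δ) = 0` pattern
  have qkill : ∀ v : B, p (δ (d v)) = -p (δ (δ v)) := by
    intro v
    have h0 := congrArg p (pe2 v)
    simp only [map_add, map_zero, ppd, zero_add] at h0
    exact eq_neg_of_add_eq_zero_left h0
  -- the first main identity, needed twice
  have g5 : (d + δ).comp (A ∘ₗ i) = (A ∘ₗ i).comp (p ∘ₗ (δ ∘ₗ (A ∘ₗ i))) := by
    ext x
    simp only [LinearMap.comp_apply, LinearMap.add_apply]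
    have e5a : δ (A (i x)) = C (δ (i x)) := pδA (i x)
    have e5b : A (i x) = A (h (δ (i x))) + i x := by rw [pA1 (i x)]; abel
    have e5c : d (A (i x)) = d (h (C (δ (i x)))) := by
      rw [e5b, map_add, pdi x, add_zero, phC (δ (i x))]
    have e5d : d (δ (i x)) + δ (δ (i x)) = 0 := by
      have := pm (i x)
      rw [pdi x, zero_add] at this
      exact this
    have e5e : A (h (d (δ (i x)))) + (A (δ (i x)) - δ (i x)) = 0 := by
      rw [← pA1 (δ (i x)), ← map_add, ← map_add, e5d, map_zero, map_zero]
    rw [add_eq_zero_iff_eq_neg, neg_sub] at e5e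
    rw [e5a, e5c, pK (δ (i x)), e5e]
    abel
  refine ⟨p ∘ₗ (δ ∘ₗ (A ∘ₗ i)), p ∘ₗ C, A ∘ₗ i, h * C, ?_, ?_, ?_, ?_, g5, ?_, ?_, ?_, ?_⟩
  · intro x N hN
    exact Aap (i x) N hN
  · intro x N hN
    show p (δ (A (i x))) = _
    rw [Aap (i x) N hN, map_sum, map_sum]
  · intro x N hN
    show p (C x) = _
    rw [Cap x N hN, map_sum]
  · intro x N hN
    show h (C x) = _
    rw [Cap x N hN, map_sum]
  · -- P (d+δ) = mcan P
    ext y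
    simp only [LinearMap.comp_apply, LinearMap.add_apply]
    rw [map_add, map_add]
    have q1 : C (d y) = C (δ (h (d y))) + d y := by rw [pC1 (d y)]; abel
    rw [q1, map_add, ppd y, add_zero, ← pδA (h (d y)), ← pδA y]
    rw [pK y, ← pC2 y]
    simp only [map_add]
    rw [qkill (h (C y))]
    abel
  · -- P I = id
    ext x
    simp only [LinearMap.comp_apply, LinearMap.id_apply]
    have c1 : C (A (i x)) = C (i x) + A (i x) - i x := by
      have := DFunLike.congr_fun eCA (i x)
      simpa only [Module.End.mul_apply, LinearMap.add_apply, LinearMap.sub_apply,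
        Module.End.one_apply] using this
    have c2 : C (i x) = i x := by
      have hcc := pC1 (i x)
      rw [phi x, map_zero, map_zero] at hcc
      exact sub_eq_zero.mp hcc.symm
    have c3 : p (A (i x)) = p (i x) := by
      have c3' : A (i x) = i x + h (δ (A (i x))) := by rw [pA2 (i x)]; abel
      rw [c3', map_add, pph, add_zero]
    rw [c1, map_sub, map_add, c2, c3, pip x]
    abel
  · -- homotopy identity
    ext y
    simp only [Module.End.mul_apply, LinearMap.add_apply, LinearMap.sub_apply,
      Module.End.one_apply, LinearMap.comp_apply]
    rw [map_add, map_add, phC (d y), phC (δ y), pA1 y, pC2 y, pK y]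
    abel
  · -- mcan² = 0
    ext x
    simp only [Module.End.mul_apply, LinearMap.comp_apply, LinearMap.zero_apply]
    have e1 : A (i (p (δ (A (i x))))) = d (A (i x)) + δ (A (i x)) := by
      have := DFunLike.congr_fun g5 x
      simp only [LinearMap.comp_apply, LinearMap.add_apply] at this
      exact this.symm
    rw [e1, map_add, map_add, qkill (A (i x))]
    abel
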